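/- Under the same hypotheses as the performance-influence decomposition, but with demonstrations of variable lengths and the unweighted behavior-cloning loss L'_bc(θ) = ∑_{ξ∈D} ∑_{(s,a)∈ξ} ℓ(s,a;θ) and unweighted trajectory loss ℓ'_traj(ξ;θ) = ∑_{(s,a)∈ξ} ℓ(s,a;θ), the performance influence Ψ_π(ξ) = −∇J(θ*)^⊤ (∇²L'_bc(θ*))^{−1} ∇ℓ'_traj(ξ;θ*) satisfies Ψ_π(ξ) = E_{τ ∼ p_{θ*}} [ R(τ) ∑_{(s',a')∈τ} ∑_{(s,a)∈ξ} Ψ_a((s',a'),(s,a)) ], where Ψ_a uses the Hessian of L'_bc. -/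

import Mathlib

/-!
Everything is linear in `u = H⁻¹ ∇ℓ'_traj(ξ; θ*)`. Since `c τ` does not depend on `θ`, the
likelihood-ratio identity `∇p_θ(τ) = p_θ(τ) ∑_{(s',a') ∈ τ} ∇log π_θ(a'|s')` gives
`∇J = E_τ[R(τ) ∑_{(s',a') ∈ τ} ∇log π(a'|s')]`, and additivity of the gradient over the
transitions of `ξ` splits `⟪∇log π(a'|s'), u⟫` into the action influences of those transitions.
-/

open scoped RealInnerProductSpace

section ListCalculus

variable {ι 𝕜 E F : Type*} [NontriviallyNormedField 𝕜] [NormedAddCommGroup E] [NormedSpace 𝕜 E]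
  [NormedAddCommGroup F] [NormedSpace 𝕜 F] {x : E}

theorem HasFDerivAt.list_sum_map (l : List ι) {f : ι → E → F} {f' : ι → E →L[𝕜] F}
    (hf : ∀ i ∈ l, HasFDerivAt (f i) (f' i) x) :
    HasFDerivAt (fun y => (l.map (f · y)).sum) (l.map f').sum x := by
  induction l with
  | nil => simpa using hasFDerivAt_const (0 : F) x
  | cons a l ih =>
    simpa using (hf a (by simp)).fun_add (ih fun i hi => hf i (by simp [hi]))

theorem HasFDerivAt.list_prod_map (l : List ι) {f : ι → E → 𝕜} {f' : ι → E →L[𝕜] 𝕜}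
    (hf : ∀ i ∈ l, HasFDerivAt (f i) (f' i) x) (hne : ∀ i ∈ l, f i x ≠ 0) :
    HasFDerivAt (fun y => (l.map (f · y)).prod)
      ((l.map (f · x)).prod • (l.map fun i => (f i x)⁻¹ • f' i).sum) x := by
  induction l with
  | nil => simpa using hasFDerivAt_const (1 : 𝕜) x
  | cons a l ih =>
    have hmul := (hf a (by simp)).fun_mul
      (ih (fun i hi => hf i (by simp [hi])) (fun i hi => hne i (by simp [hi])))
    have ha : f a x ≠ 0 := hne a (by simp)
    simp only [List.map_cons, List.prod_cons, List.sum_cons, smul_add, smul_smul]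
    rw [mul_right_comm, mul_inv_cancel₀ ha, one_mul, add_comm, ← smul_smul]
    exact hmul

theorem ContinuousLinearMap.list_sum_apply (l : List (E →L[𝕜] F)) (v : E) :
    l.sum v = (l.map (· v)).sum :=
  map_list_sum (ContinuousLinearMap.apply 𝕜 F v) l

end ListCalculus

theorem gradient_list_sum_map {ι 𝕜 F : Type*} [RCLike 𝕜] [NormedAddCommGroup F]
    [InnerProductSpace 𝕜 F] [CompleteSpace F] (l : List ι) {f : ι → F → 𝕜} {x : F}
    (hf : ∀ i ∈ l, DifferentiableAt 𝕜 (f i) x) :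
    gradient (fun y => (l.map (f · y)).sum) x = (l.map fun i => gradient (f i) x).sum := by
  rw [gradient, (HasFDerivAt.list_sum_map l fun i hi => (hf i hi).hasFDerivAt).fderiv,
    map_list_sum, List.map_map]
  rfl

theorem HasFDerivAt.list_prod_map_of_log {ι E : Type*} [NormedAddCommGroup E] [NormedSpace ℝ E]
    (l : List ι) {f : ι → E → ℝ} {x : E}
    (hf : ∀ i ∈ l, DifferentiableAt ℝ (f i) x) (hne : ∀ i ∈ l, f i x ≠ 0) :
    HasFDerivAt (fun y => (l.map (f · y)).prod)
      ((l.map (f · x)).prod • (l.map fun i => fderiv ℝ (fun y => Real.log (f i y)) x).sum) x := by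
  rw [List.map_congr_left fun i hi => ((hf i hi).hasFDerivAt.log (hne i hi)).fderiv]
  exact HasFDerivAt.list_prod_map l (fun i hi => (hf i hi).hasFDerivAt) hne

theorem stmt_8_general {S A : Type} (d : ℕ)
    (ξ : List (S × A))
    (ℓ : S → A → EuclideanSpace ℝ (Fin d) → ℝ) (hℓ : ∀ s a, ContDiff ℝ 2 (ℓ s a))
    (θs : EuclideanSpace ℝ (Fin d))
    (Hinv : EuclideanSpace ℝ (Fin d) →L[ℝ] EuclideanSpace ℝ (Fin d))
    {T : Type} [Fintype T] (R : T → ℝ) (sa : T → List (S × A))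
    (π : EuclideanSpace ℝ (Fin d) → S → A → ℝ)
    (hπpos : ∀ s a, 0 < π θs s a)
    (hπdiff : ∀ s a, Differentiable ℝ (fun θ => π θ s a))
    (c : T → ℝ)
    (p : EuclideanSpace ℝ (Fin d) → T → ℝ)
    (hp : ∀ θ τ, p θ τ = c τ * ((sa τ).map (fun pr => π θ pr.1 pr.2)).prod)
    (J : EuclideanSpace ℝ (Fin d) → ℝ) (hJ : J = fun θ => ∑ τ, p θ τ * R τ)
    (Ψa : (S × A) → (S × A) → ℝ)
    (hΨa : ∀ pr' pr, Ψa pr' pr =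
      -⟪gradient (fun θ => Real.log (π θ pr'.1 pr'.2)) θs,
         Hinv (gradient (ℓ pr.1 pr.2) θs)⟫)
    (Ψπ : ℝ)
    (hΨπ : Ψπ = -⟪gradient J θs,
      Hinv (gradient (fun θ => (ξ.map (fun pr => ℓ pr.1 pr.2 θ)).sum) θs)⟫) :
    Ψπ = ∑ τ, p θs τ *
      (R τ * ((sa τ).map (fun pr' => (ξ.map (fun pr => Ψa pr' pr)).sum)).sum) := by
  set score : S × A → EuclideanSpace ℝ (Fin d) →L[ℝ] ℝ :=
    fun pr => fderiv ℝ (fun θ => Real.log (π θ pr.1 pr.2)) θs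
  set u := Hinv (gradient (fun θ => (ξ.map fun pr => ℓ pr.1 pr.2 θ).sum) θs) with hu
  have hΨa_sum (pr' : S × A) : (ξ.map (Ψa pr')).sum = -score pr' u := by
    have hℓdiff (pr : S × A) (_ : pr ∈ ξ) : DifferentiableAt ℝ (ℓ pr.1 pr.2) θs :=
      (hℓ pr.1 pr.2).differentiable (by norm_num) θs
    have hΨa' : Ψa pr' = fun pr => -score pr' (Hinv (gradient (ℓ pr.1 pr.2) θs)) :=
      funext fun pr => by rw [hΨa, inner_gradient_left]
    rw [hΨa', hu, gradient_list_sum_map ξ hℓdiff, map_list_sum, map_list_sum, List.sum_neg,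
      List.map_map, List.map_map, List.map_map]
    rfl
  have hp' (τ : T) : HasFDerivAt (p · τ) (p θs τ • ((sa τ).map score).sum) θs := by
    simp only [hp, ← smul_smul]
    exact (HasFDerivAt.list_prod_map_of_log (sa τ) (fun pr _ => hπdiff pr.1 pr.2 θs)
      (fun pr _ => (hπpos pr.1 pr.2).ne')).const_mul (c τ)
  have hJ' : HasFDerivAt J (∑ τ, (p θs τ * R τ) • ((sa τ).map score).sum) θs := by
    rw [hJ]
    exact HasFDerivAt.fun_sum fun τ _ => by
      simpa only [smul_smul, mul_comm] using (hp' τ).mul_const (R τ)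
  rw [hΨπ, inner_gradient_left, hJ'.fderiv, sum_apply, ← Finset.sum_neg_distrib]
  refine Finset.sum_congr rfl fun τ _ => ?_
  simp only [hΨa_sum, smul_apply, ContinuousLinearMap.list_sum_apply, smul_eq_mul]
  rw [mul_assoc, ← mul_neg, ← mul_neg, List.sum_neg, List.map_map, List.map_map]
  rfl

/-- Variable-length extension of CUPID's performance-influence decomposition
(Proposition D.2): with the unweighted behavior-cloning loss
`L'_bc(θ) = ∑_{ξ∈D} ∑_{(s,a)∈ξ} ℓ(s,a;θ)` and unweighted trajectory loss, the
performance influence decomposes into the return-weighted double sum of action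
influences, without the `1/H` normalization. -/
theorem stmt_8 {S A : Type} (d N : ℕ)
    (demo : Fin N → List (S × A))
    (j₀ : Fin N) (ξ : List (S × A)) (hξ : ξ = demo j₀)
    (ℓ : S → A → EuclideanSpace ℝ (Fin d) → ℝ) (hℓ : ∀ s a, ContDiff ℝ 2 (ℓ s a))
    (θs : EuclideanSpace ℝ (Fin d))
    (Lbc : EuclideanSpace ℝ (Fin d) → ℝ)
    (hLbc : Lbc = fun θ => ∑ j, ((demo j).map (fun pr => ℓ pr.1 pr.2 θ)).sum)
    (hcrit : gradient Lbc θs = 0)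
    (Hbc Hinv : EuclideanSpace ℝ (Fin d) →L[ℝ] EuclideanSpace ℝ (Fin d))
    (hHbc : Hbc = fderiv ℝ (gradient Lbc) θs)
    (hpd : ∀ v, v ≠ 0 → 0 < ⟪v, Hbc v⟫)
    (hinv1 : Hinv.comp Hbc = ContinuousLinearMap.id ℝ (EuclideanSpace ℝ (Fin d)))
    (hinv2 : Hbc.comp Hinv = ContinuousLinearMap.id ℝ (EuclideanSpace ℝ (Fin d)))
    {T : Type} [Fintype T] (R : T → ℝ) (sa : T → List (S × A))
    (π : EuclideanSpace ℝ (Fin d) → S → A → ℝ)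
    (hπpos : ∀ s a, 0 < π θs s a)
    (hπdiff : ∀ s a, Differentiable ℝ (fun θ => π θ s a))
    (c : T → ℝ)
    (p : EuclideanSpace ℝ (Fin d) → T → ℝ)
    (hp : ∀ θ τ, p θ τ = c τ * ((sa τ).map (fun pr => π θ pr.1 pr.2)).prod)
    (hppos : ∀ τ, 0 < p θs τ)
    (hpsum : ∀ θ, ∑ τ, p θ τ = 1)
    (J : EuclideanSpace ℝ (Fin d) → ℝ) (hJ : J = fun θ => ∑ τ, p θ τ * R τ)
    (Ψa : (S × A) → (S × A) → ℝ)
    (hΨa : ∀ pr' pr, Ψa pr' pr =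
      -⟪gradient (fun θ => Real.log (π θ pr'.1 pr'.2)) θs,
         Hinv (gradient (ℓ pr.1 pr.2) θs)⟫)
    (Ψπ : ℝ)
    (hΨπ : Ψπ = -⟪gradient J θs,
      Hinv (gradient (fun θ => (ξ.map (fun pr => ℓ pr.1 pr.2 θ)).sum) θs)⟫) :
    Ψπ = ∑ τ, p θs τ *
      (R τ * ((sa τ).map (fun pr' => (ξ.map (fun pr => Ψa pr' pr)).sum)).sum) :=
  stmt_8_general d ξ ℓ hℓ θs Hinv R sa π hπpos hπdiff c p hp J hJ Ψa hΨa Ψπ hΨπ
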